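/- arXiv:2604.00266 — 2 statements merged into one kernel-verified Lean document; each statement's English description precedes it below -/
import Mathlib

section
/- Let (A, m) be a local ring with J ⊆ Jac(B) and J' ⊆ Jac(C). Assume that f⁻¹(q) ≠ m for every prime ideal q of B not containing J, and g⁻¹(q') ≠ m for every prime ideal q' of C not containing J'. Then m ⋈^{f,g}(J,J') = √(m · (A ⋈^{f,g}(J,J'))), i.e., the prime ideal m ⋈^{f,g}(J,J') := {(f(a)+j, g(a)+j') : a ∈ m, j ∈ J, j' ∈ J'} equals the radical of the ideal of A ⋈^{f,g}(J,J') generated by the image of m. -/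
open IsLocalRing

variable {A B C : Type} [CommRing A] [CommRing B] [CommRing C]

def BiAmalg (f : A →+* B) (g : A →+* C) (J : Ideal B) (J' : Ideal C) :
    Subring (B × C) where
  carrier := {x | ∃ a : A, ∃ j ∈ J, ∃ j' ∈ J', x = (f a + j, g a + j')}
  zero_mem' := ⟨0, 0, J.zero_mem, 0, J'.zero_mem, by simp <;> rfl⟩
  one_mem' := ⟨1, 0, J.zero_mem, 0, J'.zero_mem, by simp <;> rfl⟩
  add_mem' := by
    rintro x y ⟨a, j, hj, j', hj', rfl⟩ ⟨b, k, hk, k', hk', rfl⟩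
    exact ⟨a + b, j + k, J.add_mem hj hk, j' + k', J'.add_mem hj' hk', by
      simp only [Prod.mk_add_mk, map_add, Prod.mk.injEq]
      constructor <;> ring⟩
  neg_mem' := by
    rintro x ⟨a, j, hj, j', hj', rfl⟩
    exact ⟨-a, -j, J.neg_mem hj, -j', J'.neg_mem hj', by
      simp only [Prod.neg_mk, map_neg, Prod.mk.injEq]
      constructor <;> ring⟩
  mul_mem' := by
    rintro x y ⟨a, j, hj, j', hj', rfl⟩ ⟨b, k, hk, k', hk', rfl⟩
    exact ⟨a * b, f a * k + j * f b + j * k,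
      J.add_mem (J.add_mem (J.mul_mem_left _ hk) (J.mul_mem_right _ hj)) (J.mul_mem_right _ hj),
      g a * k' + j' * g b + j' * k',
      J'.add_mem (J'.add_mem (J'.mul_mem_left _ hk') (J'.mul_mem_right _ hj'))
        (J'.mul_mem_right _ hj'), by
      simp only [Prod.mk_mul_mk, map_mul, Prod.mk.injEq]
      constructor <;> ring⟩

theorem BiAmalg.mem_mk (f : A →+* B) (g : A →+* C) (J : Ideal B) (J' : Ideal C)
    (a : A) {j : B} (hj : j ∈ J) {j' : C} (hj' : j' ∈ J') :
    (f a + j, g a + j') ∈ BiAmalg f g J J' :=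
  ⟨a, j, hj, j', hj', rfl⟩

def BiAmalg.incl (f : A →+* B) (g : A →+* C) (J : Ideal B) (J' : Ideal C) :
    A →+* BiAmalg f g J J' where
  toFun a := ⟨(f a, g a), a, 0, J.zero_mem, 0, J'.zero_mem, by simp⟩
  map_one' := Subtype.ext (by simp)
  map_mul' x y := Subtype.ext (by simp [Prod.mk_mul_mk])
  map_zero' := Subtype.ext (by simp)
  map_add' x y := Subtype.ext (by simp [Prod.mk_add_mk])

instance BiAmalg.moduleA (f : A →+* B) (g : A →+* C) (J : Ideal B) (J' : Ideal C) :
    Module A (BiAmalg f g J J') :=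
  Module.compHom _ (BiAmalg.incl f g J J')


/-- For an ideal `I ⊆ A`, the ideal `I ⋈^{f,g} (J, J') = {(f a + j, g a + j') : a ∈ I, j ∈ J, j' ∈ J'}`
of the bi-amalgamation. -/
def BiAmalg.idealOf (f : A →+* B) (g : A →+* C) (J : Ideal B) (J' : Ideal C) (I : Ideal A) :
    Ideal (BiAmalg f g J J') where
  carrier := {x | ∃ a ∈ I, ∃ j ∈ J, ∃ j' ∈ J', (x : B × C) = (f a + j, g a + j')}
  zero_mem' := ⟨0, I.zero_mem, 0, J.zero_mem, 0, J'.zero_mem, by simp <;> rfl⟩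
  add_mem' := by
    rintro x y ⟨a, ha, j, hj, j', hj', hx⟩ ⟨b, hb, k, hk, k', hk', hy⟩
    refine ⟨a + b, I.add_mem ha hb, j + k, J.add_mem hj hk, j' + k', J'.add_mem hj' hk', ?_⟩
    have : ((x + y : BiAmalg f g J J') : B × C) = (x : B × C) + (y : B × C) := rfl
    rw [this, hx, hy]
    simp only [Prod.mk_add_mk, map_add, Prod.mk.injEq]
    constructor <;> ring
  smul_mem' := by
    rintro ⟨c, b, k, hk, k', hk', rfl⟩ x ⟨a, ha, j, hj, j', hj', hx⟩
    refine ⟨b * a, I.mul_mem_left b ha, f b * j + k * f a + k * j,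
      J.add_mem (J.add_mem (J.mul_mem_left _ hj) (J.mul_mem_right _ hk)) (J.mul_mem_right _ hk),
      g b * j' + k' * g a + k' * j',
      J'.add_mem (J'.add_mem (J'.mul_mem_left _ hj') (J'.mul_mem_right _ hk'))
        (J'.mul_mem_right _ hk'), ?_⟩
    have : (((⟨(f b + k, g b + k'), BiAmalg.mem_mk f g J J' b hk hk'⟩ : BiAmalg f g J J') • x :
        BiAmalg f g J J') : B × C) = (f b + k, g b + k') * (x : B × C) := rfl
    rw [this, hx]
    simp only [Prod.mk_mul_mk, map_mul, Prod.mk.injEq]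
    constructor <;> ring

section Aux

variable (f : A →+* B) (g : A →+* C) (J : Ideal B) (J' : Ideal C)

/-- The element `(j, 0)` of the bi-amalgamation, for `j ∈ J`. -/
def BiAmalg.leftElem {j : B} (hj : j ∈ J) : BiAmalg f g J J' :=
  ⟨(j, 0), 0, j, hj, 0, J'.zero_mem, by simp⟩

/-- The element `(0, j')` of the bi-amalgamation, for `j' ∈ J'`. -/
def BiAmalg.rightElem {j' : C} (hj' : j' ∈ J') : BiAmalg f g J J' :=
  ⟨(0, j'), 0, 0, J.zero_mem, j', hj', by simp⟩

theorem BiAmalg.leftElem_congr {x y : B} (hx : x ∈ J) (hy : y ∈ J) (h : x = y) :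
    BiAmalg.leftElem f g J J' hx = BiAmalg.leftElem f g J J' hy := by subst h; rfl

theorem BiAmalg.rightElem_congr {x y : C} (hx : x ∈ J') (hy : y ∈ J') (h : x = y) :
    BiAmalg.rightElem f g J J' hx = BiAmalg.rightElem f g J J' hy := by subst h; rfl

theorem BiAmalg.leftElem_mul {x y : B} (hx : x ∈ J) (hy : y ∈ J) :
    BiAmalg.leftElem f g J J' hx * BiAmalg.leftElem f g J J' hy =
      BiAmalg.leftElem f g J J' (J.mul_mem_left x hy) :=
  Subtype.ext (by simp [BiAmalg.leftElem, Prod.mk_mul_mk])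

theorem BiAmalg.rightElem_mul {x y : C} (hx : x ∈ J') (hy : y ∈ J') :
    BiAmalg.rightElem f g J J' hx * BiAmalg.rightElem f g J J' hy =
      BiAmalg.rightElem f g J J' (J'.mul_mem_left x hy) :=
  Subtype.ext (by simp [BiAmalg.rightElem, Prod.mk_mul_mk])

theorem BiAmalg.incl_mul_leftElem (a : A) {y : B} (hy : y ∈ J) :
    BiAmalg.incl f g J J' a * BiAmalg.leftElem f g J J' hy =
      BiAmalg.leftElem f g J J' (J.mul_mem_left (f a) hy) :=
  Subtype.ext (by simp [BiAmalg.leftElem, BiAmalg.incl, Prod.mk_mul_mk])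

theorem BiAmalg.incl_mul_rightElem (a : A) {y : C} (hy : y ∈ J') :
    BiAmalg.incl f g J J' a * BiAmalg.rightElem f g J J' hy =
      BiAmalg.rightElem f g J J' (J'.mul_mem_left (g a) hy) :=
  Subtype.ext (by simp [BiAmalg.rightElem, BiAmalg.incl, Prod.mk_mul_mk])

/-- Trace ideal in `B` of a prime `P` of the bi-amalgamation. -/
def BiAmalg.traceB (P : Ideal (BiAmalg f g J J')) : Ideal B where
  carrier := {c | ∀ k : B, ∀ hk : k ∈ J, BiAmalg.leftElem f g J J' (J.mul_mem_left c hk) ∈ P}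
  zero_mem' := by
    intro k hk
    rw [BiAmalg.leftElem_congr f g J J' _ J.zero_mem (zero_mul k),
      show BiAmalg.leftElem f g J J' J.zero_mem = 0 from Subtype.ext (by simp [BiAmalg.leftElem])]
    exact P.zero_mem
  add_mem' := by
    intro a b ha hb k hk
    have : BiAmalg.leftElem f g J J' (J.mul_mem_left (a + b) hk) =
        BiAmalg.leftElem f g J J' (J.mul_mem_left a hk) +
          BiAmalg.leftElem f g J J' (J.mul_mem_left b hk) :=
      Subtype.ext (by simp [BiAmalg.leftElem, Prod.mk_add_mk, add_mul])
    rw [this]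
    exact P.add_mem (ha k hk) (hb k hk)
  smul_mem' := by
    intro c x hx k hk
    rw [BiAmalg.leftElem_congr f g J J' _ (J.mul_mem_left x (J.mul_mem_left c hk))
      (by rw [smul_eq_mul]; ring)]
    exact hx (c * k) (J.mul_mem_left c hk)

/-- Trace ideal in `C` of a prime `P` of the bi-amalgamation. -/
def BiAmalg.traceC (P : Ideal (BiAmalg f g J J')) : Ideal C where
  carrier := {c | ∀ k : C, ∀ hk : k ∈ J', BiAmalg.rightElem f g J J' (J'.mul_mem_left c hk) ∈ P}
  zero_mem' := by
    intro k hk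
    rw [BiAmalg.rightElem_congr f g J J' _ J'.zero_mem (zero_mul k),
      show BiAmalg.rightElem f g J J' J'.zero_mem = 0 from
        Subtype.ext (by simp [BiAmalg.rightElem])]
    exact P.zero_mem
  add_mem' := by
    intro a b ha hb k hk
    have : BiAmalg.rightElem f g J J' (J'.mul_mem_left (a + b) hk) =
        BiAmalg.rightElem f g J J' (J'.mul_mem_left a hk) +
          BiAmalg.rightElem f g J J' (J'.mul_mem_left b hk) :=
      Subtype.ext (by simp [BiAmalg.rightElem, Prod.mk_add_mk, add_mul])
    rw [this]
    exact P.add_mem (ha k hk) (hb k hk)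
  smul_mem' := by
    intro c x hx k hk
    rw [BiAmalg.rightElem_congr f g J J' _ (J'.mul_mem_left x (J'.mul_mem_left c hk))
      (by rw [smul_eq_mul]; ring)]
    exact hx (c * k) (J'.mul_mem_left c hk)

theorem BiAmalg.keyLeft [IsLocalRing A]
    (hqB : ∀ q : Ideal B, q.IsPrime → ¬ J ≤ q → q.comap f ≠ maximalIdeal A)
    (P : Ideal (BiAmalg f g J J')) (hP : P.IsPrime)
    (hmP : Ideal.map (BiAmalg.incl f g J J') (maximalIdeal A) ≤ P)
    {j : B} (hj : j ∈ J) : BiAmalg.leftElem f g J J' hj ∈ P := by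
  by_contra h0
  set q : Ideal B := BiAmalg.traceB f g J J' P with hqdef
  have hmem : ∀ c : B, c ∈ q ↔ ∀ k : B, ∀ hk : k ∈ J,
      BiAmalg.leftElem f g J J' (J.mul_mem_left c hk) ∈ P := fun _ => Iff.rfl
  have hprime : q.IsPrime := by
    constructor
    · intro htop
      have h1 : (1 : B) ∈ q := htop ▸ Submodule.mem_top
      have := h1 j hj
      rw [BiAmalg.leftElem_congr f g J J' _ hj (one_mul j)] at this
      exact h0 this
    · intro c d hcd
      by_contra hor
      push_neg at hor
      obtain ⟨hc, hd⟩ := hor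
      rw [hmem] at hc
      push_neg at hc
      obtain ⟨k₀, hk₀, hck₀⟩ := hc
      apply hd
      intro k hk
      have h2 := hcd (k₀ * k) (J.mul_mem_left k₀ hk)
      rw [BiAmalg.leftElem_congr f g J J' _
        (J.mul_mem_left (c * k₀) (J.mul_mem_left d hk)) (by ring),
        ← BiAmalg.leftElem_mul f g J J' (J.mul_mem_left c hk₀) (J.mul_mem_left d hk)] at h2
      rcases hP.mem_or_mem h2 with h | h
      · exact absurd h hck₀
      · exact h
  have hnle : ¬ J ≤ q := by
    intro hle
    have := hle hj j hj
    rw [← BiAmalg.leftElem_mul f g J J' hj hj] at this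
    rcases hP.mem_or_mem this with h | h <;> exact h0 h
  have hcomap : q.comap f = maximalIdeal A := by
    apply le_antisymm
    · intro a ha
      by_contra hm
      have hu : IsUnit a := by
        by_contra hnu
        exact hm (IsLocalRing.mem_maximalIdeal a |>.mpr hnu)
      have hinP : BiAmalg.incl f g J J' a ∈ P := by
        have h1 := (Ideal.mem_comap.mp ha) j hj
        rw [← BiAmalg.incl_mul_leftElem f g J J' a hj] at h1
        rcases hP.mem_or_mem h1 with h | h
        · exact h
        · exact absurd h h0
      exact hP.ne_top (P.eq_top_of_isUnit_mem hinP (hu.map (BiAmalg.incl f g J J')))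
    · intro a ha
      intro k hk
      rw [← BiAmalg.incl_mul_leftElem f g J J' a hk]
      exact P.mul_mem_right _ (hmP (Ideal.mem_map_of_mem _ ha))
  exact hqB q hprime hnle hcomap

theorem BiAmalg.keyRight [IsLocalRing A]
    (hqC : ∀ q' : Ideal C, q'.IsPrime → ¬ J' ≤ q' → q'.comap g ≠ maximalIdeal A)
    (P : Ideal (BiAmalg f g J J')) (hP : P.IsPrime)
    (hmP : Ideal.map (BiAmalg.incl f g J J') (maximalIdeal A) ≤ P)
    {j' : C} (hj' : j' ∈ J') : BiAmalg.rightElem f g J J' hj' ∈ P := by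
  by_contra h0
  set q : Ideal C := BiAmalg.traceC f g J J' P with hqdef
  have hmem : ∀ c : C, c ∈ q ↔ ∀ k : C, ∀ hk : k ∈ J',
      BiAmalg.rightElem f g J J' (J'.mul_mem_left c hk) ∈ P := fun _ => Iff.rfl
  have hprime : q.IsPrime := by
    constructor
    · intro htop
      have h1 : (1 : C) ∈ q := htop ▸ Submodule.mem_top
      have := h1 j' hj'
      rw [BiAmalg.rightElem_congr f g J J' _ hj' (one_mul j')] at this
      exact h0 this
    · intro c d hcd
      by_contra hor
      push_neg at hor
      obtain ⟨hc, hd⟩ := hor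
      rw [hmem] at hc
      push_neg at hc
      obtain ⟨k₀, hk₀, hck₀⟩ := hc
      apply hd
      intro k hk
      have h2 := hcd (k₀ * k) (J'.mul_mem_left k₀ hk)
      rw [BiAmalg.rightElem_congr f g J J' _
        (J'.mul_mem_left (c * k₀) (J'.mul_mem_left d hk)) (by ring),
        ← BiAmalg.rightElem_mul f g J J' (J'.mul_mem_left c hk₀) (J'.mul_mem_left d hk)] at h2
      rcases hP.mem_or_mem h2 with h | h
      · exact absurd h hck₀
      · exact h
  have hnle : ¬ J' ≤ q := by
    intro hle
    have := hle hj' j' hj'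
    rw [← BiAmalg.rightElem_mul f g J J' hj' hj'] at this
    rcases hP.mem_or_mem this with h | h <;> exact h0 h
  have hcomap : q.comap g = maximalIdeal A := by
    apply le_antisymm
    · intro a ha
      by_contra hm
      have hu : IsUnit a := by
        by_contra hnu
        exact hm (IsLocalRing.mem_maximalIdeal a |>.mpr hnu)
      have hinP : BiAmalg.incl f g J J' a ∈ P := by
        have h1 := (Ideal.mem_comap.mp ha) j' hj'
        rw [← BiAmalg.incl_mul_rightElem f g J J' a hj'] at h1
        rcases hP.mem_or_mem h1 with h | h
        · exact h
        · exact absurd h h0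
      exact hP.ne_top (P.eq_top_of_isUnit_mem hinP (hu.map (BiAmalg.incl f g J J')))
    · intro a ha
      intro k hk
      rw [← BiAmalg.incl_mul_rightElem f g J J' a hk]
      exact P.mul_mem_right _ (hmP (Ideal.mem_map_of_mem _ ha))
  exact hqC q hprime hnle hcomap

end Aux

theorem biAmalg_maximalIdeal_eq_radical (f : A →+* B) (g : A →+* C) (J : Ideal B) (J' : Ideal C)
    [IsLocalRing A]
    (hI : J.comap f = J'.comap g)
    (hJ : J ≤ (⊥ : Ideal B).jacobson) (hJ' : J' ≤ (⊥ : Ideal C).jacobson)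
    (hq : ∀ q : Ideal B, q.IsPrime → ¬ J ≤ q → q.comap f ≠ maximalIdeal A)
    (hq' : ∀ q' : Ideal C, q'.IsPrime → ¬ J' ≤ q' → q'.comap g ≠ maximalIdeal A) :
    BiAmalg.idealOf f g J J' (maximalIdeal A) =
      (Ideal.map (BiAmalg.incl f g J J') (maximalIdeal A)).radical := by
  rcases subsingleton_or_nontrivial B with hB | hB
  · -- degenerate case: `B` (and then `C`) is the zero ring
    have h1J : (1 : A) ∈ J.comap f := by
      simp only [Ideal.mem_comap]
      rw [Subsingleton.elim (f 1) 0]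
      exact J.zero_mem
    have h1J' : g 1 ∈ J' := by rw [hI] at h1J; exact h1J
    have hC : Subsingleton C := by
      have := Ideal.mem_jacobson_bot.mp (hJ' (by simpa using h1J')) (-1)
      simp only [one_mul, neg_add_cancel, isUnit_zero_iff] at this
      exact subsingleton_of_zero_eq_one this
    have hBC : Subsingleton (B × C) := inferInstance
    ext x
    have hx : x = 0 := Subtype.ext (Subsingleton.elim _ _)
    subst hx
    exact iff_of_true (BiAmalg.idealOf f g J J' (maximalIdeal A)).zero_mem
      (Ideal.map (BiAmalg.incl f g J J') (maximalIdeal A)).radical.zero_mem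
  -- main case
  have hI0 : ∀ a : A, f a ∈ J → a ∈ maximalIdeal A := by
    intro a ha
    by_contra hm
    have hu : IsUnit a := by
      by_contra hnu
      exact hm (IsLocalRing.mem_maximalIdeal a |>.mpr hnu)
    obtain ⟨u, rfl⟩ := hu
    have := Ideal.mem_jacobson_bot.mp (hJ ha) (-(f ↑u⁻¹))
    rw [show f ↑u * -(f ↑u⁻¹) + 1 = -(f (↑u * ↑u⁻¹)) + 1 by rw [map_mul]; ring,
      Units.mul_inv, map_one, neg_add_cancel, isUnit_zero_iff] at this
    exact zero_ne_one this
  have hMprime : (BiAmalg.idealOf f g J J' (maximalIdeal A)).IsPrime := by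
    constructor
    · intro htop
      have h1 : (1 : BiAmalg f g J J') ∈ BiAmalg.idealOf f g J J' (maximalIdeal A) :=
        htop ▸ Submodule.mem_top
      obtain ⟨c, hc, j2, hj2, j2', hj2', hval⟩ := h1
      have hfst : (1 : B) = f c + j2 := congrArg Prod.fst hval
      have : f (1 - c) ∈ J := by
        rw [map_sub, map_one]
        have : (1 : B) - f c = j2 := by rw [hfst]; ring
        rw [this]; exact hj2
      have h1m : (1 : A) ∈ maximalIdeal A := by
        have := (maximalIdeal A).add_mem (hI0 _ this) hc
        simp only [sub_add_cancel] at this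
        exact this
      exact (IsLocalRing.maximalIdeal.isMaximal A).ne_top
        ((Ideal.eq_top_iff_one _).mpr h1m)
    · intro x y hxy
      obtain ⟨a, j, hj, j', hj', hxval⟩ := x.2
      obtain ⟨b, k, hk, k', hk', hyval⟩ := y.2
      obtain ⟨c, hc, j2, hj2, j2', hj2', hval⟩ := hxy
      have hfst : (f a + j) * (f b + k) = f c + j2 := by
        have h1 : ((x * y : BiAmalg f g J J') : B × C) = (x : B × C) * (y : B × C) := rfl
        have := congrArg Prod.fst hval
        rw [h1, hxval, hyval] at this
        simpa [Prod.mk_mul_mk] using this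
      have hab : f (a * b - c) ∈ J := by
        rw [map_sub, map_mul]
        have : f a * f b - f c = j2 - (f a * k + j * f b + j * k) := by
          have : f a * f b + (f a * k + j * f b + j * k) = f c + j2 := by
            rw [← hfst]; ring
          linear_combination this
        rw [this]
        exact J.sub_mem hj2 (J.add_mem (J.add_mem (J.mul_mem_left _ hk)
          (J.mul_mem_right _ hj)) (J.mul_mem_right _ hj))
      have habm : a * b ∈ maximalIdeal A := by
        have := (maximalIdeal A).add_mem (hI0 _ hab) hc
        simpa using this
      rcases ((IsLocalRing.maximalIdeal.isMaximal A).isPrime.mem_or_mem habm) with h | h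
      · exact Or.inl ⟨a, h, j, hj, j', hj', hxval⟩
      · exact Or.inr ⟨b, h, k, hk, k', hk', hyval⟩
  have hmaple : Ideal.map (BiAmalg.incl f g J J') (maximalIdeal A) ≤
      BiAmalg.idealOf f g J J' (maximalIdeal A) := by
    rw [Ideal.map_le_iff_le_comap]
    intro a ha
    exact ⟨a, ha, 0, J.zero_mem, 0, J'.zero_mem, by simp [BiAmalg.incl]⟩
  apply le_antisymm
  · -- M ≤ radical
    rw [Ideal.radical_eq_sInf]
    rintro x ⟨a, ha, j, hj, j', hj', hxval⟩
    rw [Submodule.mem_sInf]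
    rintro P ⟨hPle, hPprime⟩
    have h1 := BiAmalg.keyLeft f g J J' hq P hPprime hPle hj
    have h2 := BiAmalg.keyRight f g J J' hq' P hPprime hPle hj'
    have h3 : BiAmalg.incl f g J J' a ∈ P := hPle (Ideal.mem_map_of_mem _ ha)
    have hdec : x = BiAmalg.incl f g J J' a + BiAmalg.leftElem f g J J' hj +
        BiAmalg.rightElem f g J J' hj' := by
      apply Subtype.ext
      rw [hxval]
      simp [BiAmalg.incl, BiAmalg.leftElem, BiAmalg.rightElem, Prod.mk_add_mk]
    rw [hdec]
    exact P.add_mem (P.add_mem h3 h1) h2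
  · -- radical ≤ M
    have := Ideal.radical_mono hmaple
    rwa [hMprime.radical] at this
end

section
/- Let (A, m) be a local ring with J ⊆ Jac(B) and J' ⊆ Jac(C), and assume J and J' are finitely generated as A-modules. Then m ⋈^{f,g}(J,J') = √(m · (A ⋈^{f,g}(J,J'))), i.e., the maximal ideal m ⋈^{f,g}(J,J') := {(f(a)+j, g(a)+j') : a ∈ m, j ∈ J, j' ∈ J'} equals the radical of the ideal of A ⋈^{f,g}(J,J') generated by the image of m. -/
open IsLocalRing

variable {A B C : Type} [CommRing A] [CommRing B] [CommRing C]

/-! For `y ∈ J`, multiplication by `y` is an `A`-linear endomorphism of the finite `A`-module `J`,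
so by Cayley–Hamilton `p(y) • J = 0` for a monic `p ∈ A[X]`. Write `p(y) = p(0) + y · (p / X)(y)`:
if `p(0)` is a unit then so is `p(y)`, because `y ∈ Jac B`; if `p(0) ∈ m` it can be discarded
modulo `m J` and one recurses on `p / X`. The monic leading coefficient stops this, so
`y ^ n • y ∈ m J` for some `n`, whence `(y, 0) ^ (n + 1) ∈ m · (A ⋈ (J, J'))`, and likewise for
`(0, y')`. Thus `m ⋈ (J, J') ⊆ √(m · (A ⋈ (J, J')))`. Conversely `m ⋈ (J, J')` is radical: if
`x = (f a + j, g a + j')` has `x ^ n ∈ m ⋈ (J, J')` with `a ∉ m`, then `J` and `J'` contain units,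
which the Jacobson hypotheses allow only when `B` and `C` are zero. -/

open Polynomial

section Jacobson

variable {R S M : Type*} [CommRing R] [CommRing S] [Algebra R S]

theorem IsUnit.add_mem_jacobson_bot {u y : S} (hu : IsUnit u) (hy : y ∈ (⊥ : Ideal S).jacobson) :
    IsUnit (u + y) := by
  obtain ⟨u, rfl⟩ := hu
  have hyu : (u : S) + y = (y * ↑u⁻¹ + 1) * u := by
    rw [add_mul, mul_assoc, Units.inv_mul, mul_one, one_mul, add_comm]
  rw [hyu]
  exact (Ideal.mem_jacobson_bot.1 hy _).mul u.isUnit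

theorem isUnit_aeval_of_mem_jacobson_bot {y : S} (hy : y ∈ (⊥ : Ideal S).jacobson) {p : R[X]}
    (hp : IsUnit (p.coeff 0)) : IsUnit (aeval y p) := by
  rw [← X_mul_divX_add p, map_add, map_mul, aeval_X, aeval_C, add_comm]
  exact (hp.map _).add_mem_jacobson_bot (Ideal.mul_mem_right _ _ hy)

variable [AddCommGroup M] [Module R M] [Module S M] [IsScalarTower R S M]

theorem Submodule.smul_mem_smul_top_of_isScalarTower (I : Ideal R) (b : S) {x : M}
    (hx : x ∈ I • (⊤ : Submodule R M)) : b • x ∈ I • (⊤ : Submodule R M) := by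
  refine Submodule.smul_induction_on hx (fun a ha z _ => ?_) (fun z w hz hw => ?_)
  · rw [smul_comm]
    exact Submodule.smul_mem_smul ha Submodule.mem_top
  · rw [smul_add]
    exact add_mem hz hw

theorem Submodule.mem_smul_top_of_isUnit_smul (I : Ideal R) {u : S} (hu : IsUnit u) {x : M}
    (hx : u • x ∈ I • (⊤ : Submodule R M)) : x ∈ I • (⊤ : Submodule R M) := by
  obtain ⟨u, rfl⟩ := hu
  simpa [smul_smul] using Submodule.smul_mem_smul_top_of_isScalarTower I (↑u⁻¹ : S) hx

variable [IsLocalRing R]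

theorem exists_pow_smul_mem_of_isUnit_coeff {y : S} (hy : y ∈ (⊥ : Ideal S).jacobson) {p : R[X]}
    {i : ℕ} (hp : IsUnit (p.coeff i)) {x : M}
    (hpx : aeval y p • x ∈ maximalIdeal R • (⊤ : Submodule R M)) :
    ∃ n, y ^ n • x ∈ maximalIdeal R • (⊤ : Submodule R M) := by
  induction i generalizing p x with
  | zero =>
    exact ⟨0, by simpa using
      Submodule.mem_smul_top_of_isUnit_smul _ (isUnit_aeval_of_mem_jacobson_bot hy hp) hpx⟩
  | succ i ih =>
    by_cases hp0 : IsUnit (p.coeff 0)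
    · exact ⟨0, by simpa using
        Submodule.mem_smul_top_of_isUnit_smul _ (isUnit_aeval_of_mem_jacobson_bot hy hp0) hpx⟩
    have hsplit : aeval y p • x = aeval y p.divX • y • x + p.coeff 0 • x := by
      conv_lhs => rw [← X_mul_divX_add p]
      rw [map_add, map_mul, aeval_X, aeval_C, add_smul, mul_comm, mul_smul, algebraMap_smul]
    have hdiv : aeval y p.divX • y • x ∈ maximalIdeal R • (⊤ : Submodule R M) := by
      rw [hsplit] at hpx
      exact (Submodule.add_mem_iff_left _
        (Submodule.smul_mem_smul ((mem_maximalIdeal _).2 hp0) Submodule.mem_top)).1 hpx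
    obtain ⟨n, hn⟩ := ih (by rwa [coeff_divX]) hdiv
    exact ⟨n + 1, by rwa [pow_succ, mul_smul]⟩

theorem exists_pow_smul_mem_maximalIdeal_smul_top [Module.Finite R M] {y : S}
    (hy : y ∈ (⊥ : Ideal S).jacobson) (x : M) :
    ∃ n, y ^ n • x ∈ maximalIdeal R • (⊤ : Submodule R M) := by
  obtain ⟨p, hp, hpy⟩ := LinearMap.exists_monic_and_aeval_eq_zero R (Algebra.lsmul R R M y)
  have hpx : aeval y p • x = 0 := by
    rw [← Algebra.lsmul_apply R R, ← Polynomial.aeval_algHom_apply, hpy, LinearMap.zero_apply]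
  exact exists_pow_smul_mem_of_isUnit_coeff hy (i := p.natDegree)
    (by rw [hp.coeff_natDegree]; exact isUnit_one) (hpx ▸ zero_mem _)

end Jacobson

theorem Ideal.subsingleton_of_isUnit_mem_of_le_jacobson_bot {R : Type*} [CommRing R]
    {I : Ideal R} (hI : I ≤ (⊥ : Ideal R).jacobson) {u : R} (hu : IsUnit u) (huI : u ∈ I) :
    Subsingleton R := by
  have hbot : (⊥ : Ideal R) = ⊤ := by
    rw [← Ideal.jacobson_eq_top_iff, eq_top_iff, ← Ideal.eq_top_of_isUnit_mem I huI hu]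
    exact hI
  exact (Submodule.subsingleton_iff R).1 (subsingleton_of_bot_eq_top hbot)

theorem map_pow_sub_mem_of_add_pow_eq {R S : Type*} [CommRing R] [CommRing S] (φ : R →+* S)
    {I : Ideal S} {a c : R} {x y : S} (hx : x ∈ I) (hy : y ∈ I) {n : ℕ}
    (h : (φ a + x) ^ n = φ c + y) : φ (a ^ n - c) ∈ I := by
  have hdvd : x ∣ (φ a + x) ^ n - φ a ^ n := by
    simpa using sub_dvd_pow_sub_pow (φ a + x) (φ a) n
  have hdiff : φ (a ^ n - c) = y - ((φ a + x) ^ n - φ a ^ n) := by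
    rw [map_sub, map_pow, h]
    ring
  rw [hdiff]
  exact I.sub_mem hy (Ideal.mem_of_dvd _ hdvd hx)

namespace BiAmalg

variable (f : A →+* B) (g : A →+* C) (J : Ideal B) (J' : Ideal C)

def inl : letI : Module A J := Module.compHom _ f; J →ₗ[A] BiAmalg f g J J' :=
  letI : Module A J := Module.compHom _ f
  { toFun y := ⟨(y, 0), 0, y, y.2, 0, J'.zero_mem, by simp⟩
    map_add' y z := Subtype.ext (by simp)
    map_smul' a y := Subtype.ext (show (f a * y, (0 : C)) = (f a, g a) * ((y : B), 0) by simp) }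

def inr : letI : Module A J' := Module.compHom _ g; J' →ₗ[A] BiAmalg f g J J' :=
  letI : Module A J' := Module.compHom _ g
  { toFun y := ⟨(0, y), 0, 0, J.zero_mem, y, y.2, by simp⟩
    map_add' y z := Subtype.ext (by simp)
    map_smul' a y := Subtype.ext (show ((0 : B), g a * y) = (f a, g a) * (0, (y : C)) by simp) }

theorem mem_map_incl_of_mem_smul_top {I : Ideal A} {x : BiAmalg f g J J'}
    (hx : x ∈ I • (⊤ : Submodule A (BiAmalg f g J J'))) : x ∈ I.map (incl f g J J') :=
  Submodule.smul_induction_on hx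
    (fun _ ha r _ => Ideal.mul_mem_right r _ (Ideal.mem_map_of_mem _ ha)) fun _ _ => add_mem

theorem map_incl_le_idealOf (I : Ideal A) : I.map (incl f g J J') ≤ idealOf f g J J' I :=
  Ideal.map_le_iff_le_comap.2 fun a ha => ⟨a, ha, 0, J.zero_mem, 0, J'.zero_mem, by simp [incl]⟩

theorem eq_incl_add_inl_add_inr {x : BiAmalg f g J J'} {a : A} {j : B} (hj : j ∈ J) {j' : C}
    (hj' : j' ∈ J') (hx : (x : B × C) = (f a + j, g a + j')) :
    x = incl f g J J' a + inl f g J J' ⟨j, hj⟩ + inr f g J J' ⟨j', hj'⟩ :=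
  Subtype.ext (by rw [hx]; simp [incl, inl, inr])

variable [IsLocalRing A]

theorem inl_mem_radical (hJ : J ≤ (⊥ : Ideal B).jacobson)
    (hfin : letI : Module A J := Module.compHom _ f; Module.Finite A J) (y : J) :
    inl f g J J' y ∈ ((maximalIdeal A).map (incl f g J J')).radical := by
  let _ : Module A J := Module.compHom _ f
  let _ : Algebra A B := f.toAlgebra
  have : IsScalarTower A B J := ⟨fun a b z => Subtype.ext (mul_assoc (f a) b z)⟩
  obtain ⟨n, hn⟩ := exists_pow_smul_mem_maximalIdeal_smul_top (R := A) (hJ y.2) y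
  have hpow : inl f g J J' y ^ (n + 1) = inl f g J J' ((y : B) ^ n • y) :=
    Subtype.ext (by simp [inl, pow_succ])
  refine ⟨n + 1, mem_map_incl_of_mem_smul_top f g J J' ?_⟩
  rw [hpow]
  exact Submodule.smul_top_le_comap_smul_top _ _ hn

theorem inr_mem_radical (hJ' : J' ≤ (⊥ : Ideal C).jacobson)
    (hfin : letI : Module A J' := Module.compHom _ g; Module.Finite A J') (y : J') :
    inr f g J J' y ∈ ((maximalIdeal A).map (incl f g J J')).radical := by
  let _ : Module A J' := Module.compHom _ g
  let _ : Algebra A C := g.toAlgebra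
  have : IsScalarTower A C J' := ⟨fun a b z => Subtype.ext (mul_assoc (g a) b z)⟩
  obtain ⟨n, hn⟩ := exists_pow_smul_mem_maximalIdeal_smul_top (R := A) (hJ' y.2) y
  have hpow : inr f g J J' y ^ (n + 1) = inr f g J J' ((y : C) ^ n • y) :=
    Subtype.ext (by simp [inr, pow_succ])
  refine ⟨n + 1, mem_map_incl_of_mem_smul_top f g J J' ?_⟩
  rw [hpow]
  exact Submodule.smul_top_le_comap_smul_top _ _ hn

theorem isRadical_idealOf_maximalIdeal (hJ : J ≤ (⊥ : Ideal B).jacobson)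
    (hJ' : J' ≤ (⊥ : Ideal C).jacobson) : (idealOf f g J J' (maximalIdeal A)).IsRadical := by
  rintro x ⟨n, c, hc, l, hl, l', hl', hxn⟩
  obtain ⟨a, j, hj, j', hj', hx⟩ := x.2
  by_cases ha : a ∈ maximalIdeal A
  · exact ⟨a, ha, j, hj, j', hj', hx⟩
  have hxn' : ((f a + j) ^ n, (g a + j') ^ n) = (f c + l, g c + l') := by
    rw [← hxn, ← Prod.pow_mk, ← hx]
    rfl
  have hu : IsUnit (a ^ n - c) := by
    by_contra hu
    refine ha ((maximalIdeal.isMaximal A).isPrime.mem_of_pow_mem n ?_)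
    simpa using add_mem ((mem_maximalIdeal _).2 hu) hc
  have := (Ideal.subsingleton_of_isUnit_mem_of_le_jacobson_bot hJ (hu.map f)
    (map_pow_sub_mem_of_add_pow_eq f hj hl (Prod.ext_iff.1 hxn').1))
  have := (Ideal.subsingleton_of_isUnit_mem_of_le_jacobson_bot hJ' (hu.map g)
    (map_pow_sub_mem_of_add_pow_eq g hj' hl' (Prod.ext_iff.1 hxn').2))
  exact ⟨0, zero_mem _, 0, J.zero_mem, 0, J'.zero_mem, Subsingleton.elim _ _⟩

end BiAmalg

theorem biAmalg_maximalIdeal_eq_radical_of_finite_general (f : A →+* B) (g : A →+* C)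
    (J : Ideal B) (J' : Ideal C) [IsLocalRing A]
    (hJ : J ≤ (⊥ : Ideal B).jacobson) (hJ' : J' ≤ (⊥ : Ideal C).jacobson) :
    letI : Module A J := Module.compHom _ f
    letI : Module A J' := Module.compHom _ g
    Module.Finite A J → Module.Finite A J' →
    BiAmalg.idealOf f g J J' (maximalIdeal A) =
      (Ideal.map (BiAmalg.incl f g J J') (maximalIdeal A)).radical := by
  intro hfin hfin'
  refine le_antisymm ?_ ?_
  · rintro x ⟨a, ha, j, hj, j', hj', hx⟩
    rw [BiAmalg.eq_incl_add_inl_add_inr f g J J' hj hj' hx]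
    exact add_mem (add_mem (Ideal.le_radical (Ideal.mem_map_of_mem _ ha))
      (BiAmalg.inl_mem_radical f g J J' hJ hfin _)) (BiAmalg.inr_mem_radical f g J J' hJ' hfin' _)
  · exact (BiAmalg.isRadical_idealOf_maximalIdeal f g J J' hJ hJ').radical_le_iff.2
      (BiAmalg.map_incl_le_idealOf f g J J' _)

theorem biAmalg_maximalIdeal_eq_radical_of_finite (f : A →+* B) (g : A →+* C)
    (J : Ideal B) (J' : Ideal C) [IsLocalRing A]
    (hI : J.comap f = J'.comap g)
    (hJ : J ≤ (⊥ : Ideal B).jacobson) (hJ' : J' ≤ (⊥ : Ideal C).jacobson) :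
    letI : Module A J := Module.compHom _ f
    letI : Module A J' := Module.compHom _ g
    Module.Finite A J → Module.Finite A J' →
    BiAmalg.idealOf f g J J' (maximalIdeal A) =
      (Ideal.map (BiAmalg.incl f g J J') (maximalIdeal A)).radical :=
  biAmalg_maximalIdeal_eq_radical_of_finite_general f g J J' hJ hJ'
end
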